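/- arXiv:2604.06024 — 3 statements merged into one kernel-verified Lean document; each statement's English description precedes it below -/
import Mathlib

section
/- The function f(x) = cos(x) / (2x(1 − sin(x))) satisfies f(x) ≥ 3/2 for all x in (0, π/2). -/
/-!
With `y = x / 2` one has `cos x = (cos y - sin y) (cos y + sin y)` and
`1 - sin x = (cos y - sin y) ^ 2`, so `f x ≥ 3 / 2` amounts to
`(6 y - 1) cos y ≤ (6 y + 1) sin y` on `[0, π / 4]`. This is trivial for `y ≤ 1 / 6`; beyond it,
the Taylor bounds `cos y ≤ 1 - y² / 2 + 5 y⁴ / 96` and `sin y ≥ y - y³ / 6` reduce it to a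
polynomial inequality with minimum about `0.026` on `[1 / 6, 1]`.
-/

open Set Real

theorem cos_le_one_sub_sq_div_two_add {y : ℝ} (hy : |y| ≤ 1) :
    cos y ≤ 1 - y ^ 2 / 2 + 5 / 96 * y ^ 4 := by
  have h := (abs_le.mp (cos_bound hy)).2
  rw [pow_abs, abs_of_nonneg (by positivity : (0:ℝ) ≤ y ^ 4)] at h
  linarith

theorem cos_two_mul_eq_mul (y : ℝ) : cos (2 * y) = (cos y - sin y) * (cos y + sin y) := by
  rw [cos_two_mul', sq_sub_sq, mul_comm]

theorem one_sub_sin_two_mul (y : ℝ) : 1 - sin (2 * y) = (cos y - sin y) ^ 2 := by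
  rw [sin_two_mul]
  linear_combination -sin_sq_add_cos_sq y

theorem six_mul_mul_cos_sub_sin_le {y : ℝ} (hy₀ : 0 ≤ y) (hy₁ : y ≤ 1) :
    6 * y * (cos y - sin y) ≤ cos y + sin y := by
  have hpi : y ≤ π / 2 := by linarith [pi_gt_three]
  have hcos : 0 ≤ cos y := cos_nonneg_of_mem_Icc ⟨by linarith, hpi⟩
  have hsin : 0 ≤ sin y := sin_nonneg_of_nonneg_of_le_pi hy₀ (by linarith)
  suffices (6 * y - 1) * cos y ≤ (6 * y + 1) * sin y by linarith
  rcases le_or_gt (6 * y) 1 with hsmall | hlarge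
  · nlinarith
  have hpoly :
      (6 * y - 1) * (1 - y ^ 2 / 2 + 5 / 96 * y ^ 4) ≤ (6 * y + 1) * (y - y ^ 3 / 6) := by
    nlinarith [sq_nonneg (y - 37/100), mul_nonneg hy₀ (sq_nonneg (y - 37/100)),
      mul_nonneg (sub_nonneg.2 hy₁) (sq_nonneg (y - 37/100)), mul_nonneg hy₀ (sub_nonneg.2 hy₁),
      pow_nonneg hy₀ 3, pow_nonneg hy₀ 4]
  calc (6 * y - 1) * cos y ≤ (6 * y - 1) * (1 - y ^ 2 / 2 + 5 / 96 * y ^ 4) :=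
        mul_le_mul_of_nonneg_left
          (cos_le_one_sub_sq_div_two_add (by rwa [abs_of_nonneg hy₀])) (by linarith)
    _ ≤ (6 * y + 1) * (y - y ^ 3 / 6) := hpoly
    _ ≤ (6 * y + 1) * sin y := mul_le_mul_of_nonneg_left (sin_ge_sub_cube hy₀) (by linarith)

theorem three_mul_mul_one_sub_sin_le_cos {x : ℝ} (hx₀ : 0 ≤ x) (hx₁ : x ≤ π / 2) :
    3 * x * (1 - sin x) ≤ cos x := by
  obtain ⟨y, rfl⟩ : ∃ y, x = 2 * y := ⟨x / 2, by ring⟩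
  have hy₀ : 0 ≤ y := by linarith
  have hy₁ : y ≤ 1 := by linarith [pi_lt_four]
  have hcos : 0 < cos y := cos_pos_of_mem_Ioo ⟨by linarith [pi_pos], by linarith [pi_pos]⟩
  have hsin : 0 ≤ sin y := sin_nonneg_of_nonneg_of_le_pi hy₀ (by linarith [pi_pos])
  have hdiff : 0 ≤ cos y - sin y := by
    have := cos_nonneg_of_mem_Icc ⟨by linarith [pi_pos], hx₁⟩
    rw [cos_two_mul_eq_mul] at this
    exact nonneg_of_mul_nonneg_left this (by linarith)
  rw [one_sub_sin_two_mul, cos_two_mul_eq_mul]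
  calc 3 * (2 * y) * (cos y - sin y) ^ 2
        = (cos y - sin y) * (6 * y * (cos y - sin y)) := by ring
    _ ≤ (cos y - sin y) * (cos y + sin y) :=
        mul_le_mul_of_nonneg_left (six_mul_mul_cos_sub_sin_le hy₀ hy₁) hdiff

theorem f_lower_bound_three_halves :
    ∀ x ∈ Ioo (0:ℝ) (π / 2),
      (3 : ℝ) / 2 ≤ Real.cos x / (2 * x * (1 - Real.sin x)) := by
  rintro x ⟨hx₀, hx₁⟩
  have hsin : sin x < 1 := by
    simpa using sin_lt_sin_of_lt_of_le_pi_div_two (by linarith [pi_pos]) le_rfl hx₁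
  rw [le_div_iff₀ (by positivity)]
  linarith [three_mul_mul_one_sub_sin_le_cos hx₀.le hx₁.le]
end

section
/- Let Y ~ N(μ̃, σ̃²), σ̃ > 0, ε ∈ (0,1), and let γ be the unique solution of erf((γ−μ̃)/(√2σ̃)) + erf((γ+μ̃)/(√2σ̃)) = 2(1−ε). Then E[|Y| · 1{|Y| > γ}] = (μ̃/2)(erf((γ+μ̃)/(√2σ̃)) − erf((γ−μ̃)/(√2σ̃))) + (σ̃/√(2π))(e^{−(γ+μ̃)²/(2σ̃²)} + e^{−(γ−μ̃)²/(2σ̃²)}), and hence E[|Y| given |Y| > γ] equals this quantity divided by ε. -/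
/-!
Split `{|y| > γ}` into `{y > γ}` and `{-y > γ}`; the second piece is the first for `-Y`, which
is again Gaussian with the mean negated, so everything reduces to the two right-tail integrals of
a Gaussian density. Both follow from the fundamental theorem of calculus:
`erf ((x - μ) / √(2v)) / 2` is an antiderivative of the density, and `-v` times the density is an
antiderivative of `x - μ` times the density. The hypothesis on `γ` forces `γ > 0`, so that the
two pieces are disjoint, and makes the tail mass equal to `ε`.
-/

open Set MeasureTheory ProbabilityTheory Real

/-- The error function `erf x = (2/√π) ∫₀ˣ e^{−t²} dt`. -/
noncomputable def erf (x : ℝ) : ℝ :=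
  (2 / Real.sqrt π) * ∫ t in (0:ℝ)..x, Real.exp (-t ^ 2)

open Filter Topology
open scoped NNReal

lemma integrable_exp_neg_sq : Integrable fun t : ℝ => exp (-t ^ 2) := by
  simpa using integrable_exp_neg_mul_sq one_pos

lemma hasDerivAt_erf (x : ℝ) : HasDerivAt erf (2 / √π * exp (-x ^ 2)) x :=
  ((by fun_prop : Continuous fun t : ℝ => exp (-t ^ 2)).integral_hasStrictDerivAt 0 x)
    |>.hasDerivAt.const_mul _

lemma erf_strictMono : StrictMono erf :=
  strictMono_of_hasDerivAt_pos hasDerivAt_erf fun _ => by positivity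

lemma erf_neg (x : ℝ) : erf (-x) = -erf x := by
  have h := intervalIntegral.integral_comp_neg (a := 0) (b := x) fun t => exp (-t ^ 2)
  simp only [neg_sq, neg_zero] at h
  rw [erf, erf, intervalIntegral.integral_symm (-x), ← h]
  ring

lemma tendsto_erf_atTop : Tendsto erf atTop (𝓝 1) := by
  have hlim := intervalIntegral_tendsto_integral_Ioi 0 integrable_exp_neg_sq.integrableOn
    tendsto_id
  have hhalf : ∫ t in Ioi (0 : ℝ), exp (-t ^ 2) = √π / 2 := by
    simpa using integral_gaussian_Ioi 1
  rw [hhalf] at hlim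
  have hone : 2 / √π * (√π / 2) = 1 := by field_simp
  rw [← hone]
  exact hlim.const_mul _

lemma pos_of_erf_sub_add_erf_add_pos {a b s : ℝ} (hs : 0 < s)
    (h : 0 < erf ((a - b) / s) + erf ((a + b) / s)) : 0 < a := by
  by_contra! ha
  have hle : (a - b) / s ≤ -((a + b) / s) := by
    rw [← neg_div]
    gcongr
    linarith
  have := erf_strictMono.monotone hle
  rw [erf_neg] at this
  linarith

namespace ProbabilityTheory

variable (μ : ℝ) {v : ℝ≥0}

lemma hasDerivAt_half_erf_eq_gaussianPDFReal (x : ℝ) :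
    HasDerivAt (fun x => erf ((x - μ) / √(2 * v)) / 2) (gaussianPDFReal μ v x) x := by
  refine (((hasDerivAt_erf _).comp x (((hasDerivAt_id x).sub_const μ).div_const _)).div_const 2)
    |>.congr_deriv ?_
  rw [gaussianPDFReal, div_pow, sq_sqrt (by positivity), show 2 * π * v = π * (2 * v) by ring,
    sqrt_mul pi_pos.le, neg_div]
  simp only [id]
  ring

lemma integral_Ioi_gaussianPDFReal (hv : v ≠ 0) (c : ℝ) :
    ∫ x in Ioi c, gaussianPDFReal μ v x = (1 - erf ((c - μ) / √(2 * v))) / 2 := by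
  have hlim : Tendsto (fun x => erf ((x - μ) / √(2 * v)) / 2) atTop (𝓝 (1 / 2)) :=
    (tendsto_erf_atTop.comp ((tendsto_atTop_add_const_right _ (-μ) tendsto_id).atTop_div_const
      (by positivity))).div_const 2
  rw [integral_Ioi_of_hasDerivAt_of_tendsto'
    (fun x _ => hasDerivAt_half_erf_eq_gaussianPDFReal μ x)
    (integrable_gaussianPDFReal μ v).integrableOn hlim]
  ring

lemma hasDerivAt_gaussianPDFReal (x : ℝ) :
    HasDerivAt (gaussianPDFReal μ v) (-(x - μ) / v * gaussianPDFReal μ v x) x := by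
  refine ((((hasDerivAt_id x).sub_const μ).fun_pow 2).fun_neg.div_const (2 * (v : ℝ))).exp
    |>.const_mul _ |>.congr_deriv ?_
  simp only [gaussianPDFReal, id]
  ring

lemma integrable_sub_mul_gaussianPDFReal (hv : v ≠ 0) :
    Integrable fun x => (x - μ) * gaussianPDFReal μ v x := by
  have h := ((integrable_mul_exp_neg_mul_sq (b := (2 * v)⁻¹) (by positivity)).const_mul
    (√(2 * π * v))⁻¹).comp_sub_right μ
  refine h.congr (ae_of_all _ fun x => ?_)
  simp only [gaussianPDFReal, neg_mul, inv_mul_eq_div, neg_div]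
  ring

lemma integral_Ioi_sub_mul_gaussianPDFReal (hv : v ≠ 0) (c : ℝ) :
    ∫ x in Ioi c, (x - μ) * gaussianPDFReal μ v x = v * gaussianPDFReal μ v c := by
  have hderiv x : HasDerivAt (fun x => -v * gaussianPDFReal μ v x)
      ((x - μ) * gaussianPDFReal μ v x) x :=
    (hasDerivAt_gaussianPDFReal μ x).const_mul (-(v : ℝ)) |>.congr_deriv (by field_simp)
  have hlim : Tendsto (gaussianPDFReal μ v) atTop (𝓝 0) :=
    tendsto_zero_of_hasDerivAt_of_integrableOn_Ioi (a := 0)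
      (fun x _ => hasDerivAt_gaussianPDFReal μ x)
      (((integrable_sub_mul_gaussianPDFReal μ hv).const_mul (-(v : ℝ)⁻¹)).integrableOn
        |>.congr_fun (fun x _ => by ring) measurableSet_Ioi)
      (integrable_gaussianPDFReal μ v).integrableOn
  rw [integral_Ioi_of_hasDerivAt_of_tendsto' (fun x _ => hderiv x)
    (integrable_sub_mul_gaussianPDFReal μ hv).integrableOn
    (by simpa using hlim.const_mul (-(v : ℝ)))]
  ring

lemma setIntegral_gaussianReal_eq_setIntegral_mul (hv : v ≠ 0) {s : Set ℝ}
    (hs : MeasurableSet s) (f : ℝ → ℝ) :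
    ∫ x in s, f x ∂gaussianReal μ v = ∫ x in s, gaussianPDFReal μ v x * f x := by
  rw [← integral_indicator hs, integral_gaussianReal_eq_integral_smul hv,
    ← integral_indicator hs]
  simp only [smul_eq_mul, indicator_mul_right]

lemma gaussianReal_real_Ioi (hv : v ≠ 0) (c : ℝ) :
    (gaussianReal μ v).real (Ioi c) = (1 - erf ((c - μ) / √(2 * v))) / 2 := by
  rw [measureReal_def, gaussianReal_apply_eq_integral _ hv, ENNReal.toReal_ofReal
    (setIntegral_nonneg measurableSet_Ioi fun x _ => gaussianPDFReal_nonneg μ v x),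
    integral_Ioi_gaussianPDFReal μ hv]

lemma setIntegral_Ioi_id_gaussianReal (hv : v ≠ 0) (c : ℝ) :
    ∫ x in Ioi c, x ∂gaussianReal μ v
      = μ * ((1 - erf ((c - μ) / √(2 * v))) / 2) + v * gaussianPDFReal μ v c := by
  calc ∫ x in Ioi c, x ∂gaussianReal μ v
      = ∫ x in Ioi c, ((x - μ) * gaussianPDFReal μ v x + μ * gaussianPDFReal μ v x) := by
        rw [setIntegral_gaussianReal_eq_setIntegral_mul μ hv measurableSet_Ioi]
        congr with x
        ring
    _ = _ := by
        rw [integral_add (integrable_sub_mul_gaussianPDFReal μ hv).integrableOn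
          ((integrable_gaussianPDFReal μ v).const_mul μ).integrableOn, integral_const_mul,
          integral_Ioi_sub_mul_gaussianPDFReal μ hv, integral_Ioi_gaussianPDFReal μ hv]
        ring

lemma mul_gaussianPDFReal_of_coe_eq_sq {σ : ℝ} (hσ : 0 < σ) (hv : (v : ℝ) = σ ^ 2)
    (x : ℝ) :
    v * gaussianPDFReal μ v x = σ / √(2 * π) * exp (-(x - μ) ^ 2 / (2 * σ ^ 2)) := by
  rw [gaussianPDFReal, hv, sqrt_mul (by positivity), sqrt_sq hσ.le]
  field_simp

end ProbabilityTheory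

section FoldedTail

variable {γ : ℝ}

lemma setOf_lt_abs_eq_union :
    {y : ℝ | γ < |y|} = Ioi γ ∪ (fun y => -y) ⁻¹' Ioi γ :=
  Set.ext fun y => lt_abs (a := γ) (b := y)

lemma disjoint_Ioi_neg_preimage_Ioi (hγ : 0 ≤ γ) :
    Disjoint (Ioi γ) ((fun y : ℝ => -y) ⁻¹' Ioi γ) :=
  Set.disjoint_left.2 fun y (h₁ : γ < y) (h₂ : γ < -y) => by linarith

lemma setIntegral_abs_setOf_lt_abs (ν : Measure ℝ) (hν : Integrable (fun y => y) ν)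
    (hγ : 0 ≤ γ) :
    ∫ y in {y | γ < |y|}, |y| ∂ν
      = ∫ y in Ioi γ, y ∂ν + ∫ y in Ioi γ, y ∂ν.map (fun y => -y) := by
  rw [setOf_lt_abs_eq_union, setIntegral_union (disjoint_Ioi_neg_preimage_Ioi hγ)
    (measurableSet_Ioi.preimage measurable_neg) hν.abs.integrableOn hν.abs.integrableOn,
    setIntegral_map measurableSet_Ioi (by fun_prop) (by fun_prop)]
  congr 1
  · exact setIntegral_congr_fun measurableSet_Ioi fun y hy => abs_of_pos (hγ.trans_lt hy)
  · refine setIntegral_congr_fun (measurableSet_Ioi.preimage measurable_neg)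
      fun y (hy : γ < -y) => abs_of_neg ?_
    linarith

lemma measureReal_setOf_lt_abs (ν : Measure ℝ) [IsFiniteMeasure ν] (hγ : 0 ≤ γ) :
    ν.real {y | γ < |y|} = ν.real (Ioi γ) + (ν.map (fun y => -y)).real (Ioi γ) := by
  rw [setOf_lt_abs_eq_union, measureReal_union (disjoint_Ioi_neg_preimage_Ioi hγ)
    (measurableSet_Ioi.preimage measurable_neg), map_measureReal_apply (by fun_prop)
    measurableSet_Ioi]

end FoldedTail

theorem folded_normal_conditional_tail_expectation
    (μt σt ε γ : ℝ) (hσ : 0 < σt) (hε : ε ∈ Ioo (0:ℝ) 1)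
    (hγ : erf ((γ - μt) / (Real.sqrt 2 * σt)) + erf ((γ + μt) / (Real.sqrt 2 * σt))
        = 2 * (1 - ε))
    (ν : Measure ℝ) (hν : ν = gaussianReal μt ⟨σt ^ 2, sq_nonneg σt⟩) :
    (∫ y in {y : ℝ | γ < |y|}, |y| ∂ν) =
        (μt / 2) * (erf ((γ + μt) / (Real.sqrt 2 * σt)) - erf ((γ - μt) / (Real.sqrt 2 * σt)))
          + (σt / Real.sqrt (2 * π)) *
            (Real.exp (-(γ + μt) ^ 2 / (2 * σt ^ 2)) + Real.exp (-(γ - μt) ^ 2 / (2 * σt ^ 2))) ∧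
      (∫ y in {y : ℝ | γ < |y|}, |y| ∂ν) / (ν {y : ℝ | γ < |y|}).toReal =
        ((μt / 2) * (erf ((γ + μt) / (Real.sqrt 2 * σt)) - erf ((γ - μt) / (Real.sqrt 2 * σt)))
          + (σt / Real.sqrt (2 * π)) *
            (Real.exp (-(γ + μt) ^ 2 / (2 * σt ^ 2)) + Real.exp (-(γ - μt) ^ 2 / (2 * σt ^ 2)))) / ε := by
  set v : ℝ≥0 := ⟨σt ^ 2, sq_nonneg σt⟩
  have hvσ : (v : ℝ) = σt ^ 2 := rfl
  have hv : v ≠ 0 := by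
    simpa [← NNReal.coe_ne_zero, hvσ] using hσ.ne'
  have hscale : √(2 * v) = √2 * σt := by rw [hvσ, sqrt_mul zero_le_two, sqrt_sq hσ.le]
  have hγ0 : 0 < γ := pos_of_erf_sub_add_erf_add_pos (b := μt) (s := √2 * σt)
    (by positivity) (by linarith [hε.2])
  have hint : Integrable (fun y => y) ν := hν ▸ (memLp_id_gaussianReal 1).integrable le_rfl
  have hmass : ν.real {y | γ < |y|} = ε := by
    rw [hν, measureReal_setOf_lt_abs _ hγ0.le, gaussianReal_map_neg, gaussianReal_real_Ioi _ hv,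
      gaussianReal_real_Ioi _ hv, hscale, sub_neg_eq_add]
    linarith
  refine (fun htail => ⟨htail, by rw [← measureReal_def, hmass, htail]⟩) ?_
  rw [setIntegral_abs_setOf_lt_abs _ hint hγ0.le, hν, gaussianReal_map_neg,
    setIntegral_Ioi_id_gaussianReal _ hv, setIntegral_Ioi_id_gaussianReal _ hv,
    mul_gaussianPDFReal_of_coe_eq_sq _ hσ hvσ, mul_gaussianPDFReal_of_coe_eq_sq _ hσ hvσ,
    hscale, sub_neg_eq_add]
  ring
end

section
/- For the complete graph conditional statistics: if the steady-state covariance matrix has σᵢᵢ = a(n−1)/n and σᵢⱼ = −a/n for i ≠ j (a > 0), and m < n agents are observed at values y_f ∈ ℝ^m, then the conditional mean of any unobserved coordinate is μ̃ = −(1ᵀ_m y_f)/(n−m) and the conditional variance is σ̃² = a·((n−1)/n)·(1 − m/((n−1)(n−m))). -/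
/-!
The observed block of the covariance is `Σ₂₂ = a • 1 - (a / n) • J` with `J` the all-ones matrix,
and `Σ₁₂ = -(a / n) • 1ᵀ`. Matrices `α • 1 + β • J` are closed under multiplication, so
Sherman–Morrison gives `Σ₂₂⁻¹` in the same form. In particular `1ᵀ` is a left eigenvector of
`Σ₂₂⁻¹` with eigenvalue `(α + mβ)⁻¹ = n / (a (n - m))`, which yields both formulas at once.
-/

open Matrix Finset

namespace Matrix

variable {ι K : Type*} [DecidableEq ι] [Field K]

def scalarAddConst (α β : K) : Matrix ι ι K := α • 1 + of fun _ _ => β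

theorem scalarAddConst_apply (α β : K) (i j : ι) :
    scalarAddConst α β i j = (if i = j then α else 0) + β := by
  simp [scalarAddConst, one_apply]

variable [Fintype ι]

theorem scalarAddConst_mul (α β α' β' : K) :
    (scalarAddConst α β : Matrix ι ι K) * scalarAddConst α' β' =
      scalarAddConst (α * α') (α * β' + β * α' + Fintype.card ι * β * β') := by
  ext i j
  simp only [scalarAddConst, mul_apply, add_apply, smul_apply, one_apply, smul_eq_mul, mul_ite,
    mul_one, mul_zero, of_apply, mul_add, add_mul, ite_mul, zero_mul, sum_add_distrib, sum_ite_eq',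
    mem_univ, ↓reduceIte, sum_ite_eq, sum_const, card_univ, nsmul_eq_mul]
  ring

theorem inv_scalarAddConst {α β : K} (hα : α ≠ 0) (hαβ : α + Fintype.card ι * β ≠ 0) :
    (scalarAddConst α β : Matrix ι ι K)⁻¹ =
      scalarAddConst α⁻¹ (-β / (α * (α + Fintype.card ι * β))) := by
  refine inv_eq_right_inv ?_
  set s := α + Fintype.card ι * β with hs
  have hβ : α * (-β / (α * s)) + β * α⁻¹ + Fintype.card ι * β * (-β / (α * s)) = 0 := by
    field_simp
    rw [hs]
    ring
  rw [scalarAddConst_mul, mul_inv_cancel₀ hα, hβ, scalarAddConst, one_smul]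
  exact add_eq_left.2 of_zero

theorem scalarAddConst_mulVec (α β : K) (v : ι → K) :
    scalarAddConst α β *ᵥ v = α • v + fun _ => β * ∑ i, v i := by
  rw [scalarAddConst, add_mulVec, smul_mulVec, one_mulVec]
  ext i
  simp [mulVec, dotProduct, mul_sum]

theorem const_dotProduct_inv_scalarAddConst_mulVec {α β : K} (hα : α ≠ 0)
    (hαβ : α + Fintype.card ι * β ≠ 0) (c : K) (v : ι → K) :
    (fun _ => c) ⬝ᵥ ((scalarAddConst α β)⁻¹ *ᵥ v) = c / (α + Fintype.card ι * β) * ∑ i, v i := by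
  rw [inv_scalarAddConst hα hαβ, scalarAddConst_mulVec]
  set s := α + Fintype.card ι * β with hs
  simp only [dotProduct, mul_add, Pi.add_apply, Pi.smul_apply, smul_eq_mul, sum_add_distrib,
    ← mul_sum, sum_const, card_univ, nsmul_eq_mul]
  field_simp
  rw [hs]
  ring

end Matrix

/-- Conditional statistics in the complete-graph consensus network: with steady-state
covariance `Σᵢᵢ = a(n−1)/n`, `Σᵢⱼ = −a/n` (`i ≠ j`), observing `m < n` agents at `y_f`
yields conditional mean `−(1ᵀy_f)/(n−m)` and conditional variance
`a((n−1)/n)(1 − m/((n−1)(n−m)))` for any unobserved agent. -/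
theorem complete_graph_conditional_statistics
    (n m : ℕ) (hm : 1 ≤ m) (hmn : m < n) (a : ℝ) (ha : 0 < a)
    (S22 : Matrix (Fin m) (Fin m) ℝ)
    (hS22 : S22 = Matrix.of fun i j =>
      if i = j then a * ((n : ℝ) - 1) / n else -a / n)
    (w : Fin m → ℝ) (hw : w = fun _ => -a / n)
    (yf : Fin m → ℝ) :
    w ⬝ᵥ (S22⁻¹ *ᵥ yf) = -(∑ i, yf i) / ((n : ℝ) - m) ∧
      a * ((n : ℝ) - 1) / n - w ⬝ᵥ (S22⁻¹ *ᵥ w) =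
        a * (((n : ℝ) - 1) / n) * (1 - (m : ℝ) / (((n : ℝ) - 1) * ((n : ℝ) - m))) := by
  have hn : (n : ℝ) ≠ 0 := Nat.cast_ne_zero.2 (by omega)
  have hnm : (n : ℝ) - m ≠ 0 := sub_ne_zero.2 (by exact_mod_cast hmn.ne')
  have hn1 : (n : ℝ) - 1 ≠ 0 := sub_ne_zero.2 (by exact_mod_cast (hm.trans_lt hmn).ne')
  have hS : S22 = scalarAddConst a (-a / n) := by
    ext i j
    rw [hS22, of_apply, scalarAddConst_apply]
    split_ifs
    · field_simp
      ring
    · ring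
  have hsum : a + Fintype.card (Fin m) * (-a / n) = a * (n - m) / n := by
    rw [Fintype.card_fin]
    field_simp
    ring
  have hsum_ne : a + Fintype.card (Fin m) * (-a / n) ≠ 0 := by
    rw [hsum]
    exact div_ne_zero (mul_ne_zero ha.ne' hnm) hn
  rw [hS, hw, const_dotProduct_inv_scalarAddConst_mulVec ha.ne' hsum_ne,
    const_dotProduct_inv_scalarAddConst_mulVec ha.ne' hsum_ne, hsum]
  simp only [sum_const, card_univ, Fintype.card_fin, nsmul_eq_mul]
  constructor
  · field_simp
  · field_simp
end
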